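/- Let T > 0 and let A : [0,T] → ℝ^{N×N} be continuous such that for each t, A(t) is a Markov generator, i.e., its off-diagonal entries are nonnegative and each of its columns sums to zero. Let r : [0,T] → ℝ^N be continuous, and suppose p, p̃ : [0,T] → ℝ^N are differentiable with p′(t) = A(t) p(t) and p̃′(t) = A(t) p̃(t) + r(t). Then for every z ∈ ℝ^N, |zᵀ (p(T) − p̃(T))| ≤ ‖z‖_∞ ( ∫₀ᵀ ‖r(t)‖_{ℓ¹} dt + ‖p(0) − p̃(0)‖_{ℓ¹} ). -/

import Mathlib

/-!
The error `e = p - p̃` solves `e' = A e - r`. A Markov generator is dissipative in `ℓ¹`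
(`σ ⬝ᵥ A e ≤ 0` for every sign vector `σ` of `e`), so the right derivative of `‖e‖_{ℓ¹}` is at
most `‖r‖_{ℓ¹}`; integrating bounds `‖e(T)‖_{ℓ¹}`, and pairing `ℓ∞` against `ℓ¹` gives the estimate.
-/

open Matrix Set Filter Topology MeasureTheory intervalIntegral

def Matrix.IsMarkovGenerator {ι : Type*} [Fintype ι] (A : Matrix ι ι ℝ) : Prop :=
  (∀ i j, i ≠ j → 0 ≤ A i j) ∧ ∀ j, ∑ i, A i j = 0

lemma abs_dotProduct_le_norm_mul_sum_abs {ι : Type*} [Fintype ι] (z v : ι → ℝ) :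
    |z ⬝ᵥ v| ≤ ‖z‖ * ∑ i, |v i| := by
  rw [Finset.mul_sum]
  refine (Finset.abs_sum_le_sum_abs _ _).trans (Finset.sum_le_sum fun i _ => ?_)
  rw [abs_mul, ← Real.norm_eq_abs (z i)]
  exact mul_le_mul_of_nonneg_right (norm_le_pi_norm z i) (abs_nonneg _)

lemma dotProduct_le_sum_abs {ι : Type*} [Fintype ι] {σ : ι → ℝ} (hσ : ∀ i, |σ i| ≤ 1)
    (v : ι → ℝ) : σ ⬝ᵥ v ≤ ∑ i, |v i| := by
  have hσ_norm : ‖σ‖ ≤ 1 := (pi_norm_le_iff_of_nonneg zero_le_one).2 hσ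
  calc σ ⬝ᵥ v ≤ ‖σ‖ * ∑ i, |v i| := (le_abs_self _).trans (abs_dotProduct_le_norm_mul_sum_abs σ v)
    _ ≤ ∑ i, |v i| :=
      mul_le_of_le_one_left (Finset.sum_nonneg fun i _ => abs_nonneg _) hσ_norm

/-- `σ` plays the role of a subgradient of `‖·‖_{ℓ¹}` at `e`. -/
lemma Matrix.IsMarkovGenerator.dotProduct_mulVec_nonpos {ι : Type*} [Fintype ι]
    {A : Matrix ι ι ℝ} (hA : A.IsMarkovGenerator) {σ e : ι → ℝ} (hσ : ∀ i, |σ i| ≤ 1)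
    (hσe : ∀ i, σ i * e i = |e i|) : σ ⬝ᵥ (A *ᵥ e) ≤ 0 := by
  have hterm : ∀ i j, σ i * A i j * e j ≤ A i j * |e j| := fun i j => by
    by_cases hij : i = j
    · subst hij
      exact (by rw [← hσe]; ring : σ i * A i i * e i = A i i * |e i|).le
    · calc σ i * A i j * e j = A i j * (σ i * e j) := by ring
        _ ≤ A i j * |e j| := by
          refine mul_le_mul_of_nonneg_left ?_ (hA.1 i j hij)
          calc σ i * e j ≤ |σ i| * |e j| := by rw [← abs_mul]; exact le_abs_self _
            _ ≤ |e j| := mul_le_of_le_one_left (abs_nonneg _) (hσ i)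
  calc σ ⬝ᵥ (A *ᵥ e) = ∑ j, ∑ i, σ i * A i j * e j := by
        simp only [dotProduct, mulVec, Finset.mul_sum, mul_assoc]
        exact Finset.sum_comm
    _ ≤ ∑ j, ∑ i, A i j * |e j| :=
        Finset.sum_le_sum fun j _ => Finset.sum_le_sum fun i _ => hterm i j
    _ = 0 := by simp [← Finset.sum_mul, hA.2]

lemma HasDerivAt.exists_hasDerivWithinAt_Ioi_abs {φ : ℝ → ℝ} {d x : ℝ} (h : HasDerivAt φ d x) :
    ∃ σ : ℝ, |σ| ≤ 1 ∧ σ * φ x = |φ x| ∧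
      HasDerivWithinAt (fun t => |φ t|) (σ * d) (Ioi x) x := by
  have abs_sign_le_one : ∀ y : ℝ, |(SignType.sign y : ℝ)| ≤ 1 := fun y => by
    rcases lt_trichotomy y 0 with hy | hy | hy <;> simp [hy]
  by_cases h0 : φ x = 0
  · refine ⟨SignType.sign d, abs_sign_le_one d, by simp [h0], ?_⟩
    rw [sign_mul_self, hasDerivWithinAt_iff_tendsto_slope]
    have hslope : Tendsto (slope φ x) (𝓝[Ioi x \ {x}] x) (𝓝 d) :=
      (hasDerivAt_iff_tendsto_slope.1 h).mono_left (nhdsWithin_mono x fun _ ht => ht.2)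
    refine hslope.abs.congr' (eventually_nhdsWithin_of_forall fun t ht => ?_)
    simp only [slope_def_field, h0, abs_zero, sub_zero, abs_div,
      abs_of_pos (sub_pos.2 (show x < t from ht.1))]
  · exact ⟨SignType.sign (φ x), abs_sign_le_one _, sign_mul_self _,
      ((hasDerivAt_abs h0).comp x h).hasDerivWithinAt⟩

lemma HasDerivAt.exists_hasDerivWithinAt_Ioi_sum_abs {ι : Type*} [Fintype ι] {e : ℝ → ι → ℝ}
    {d : ι → ℝ} {x : ℝ} (h : HasDerivAt e d x) :
    ∃ σ : ι → ℝ, (∀ i, |σ i| ≤ 1) ∧ (∀ i, σ i * e x i = |e x i|) ∧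
      HasDerivWithinAt (fun t => ∑ i, |e t i|) (σ ⬝ᵥ d) (Ioi x) x := by
  choose σ hσ hσe hderiv using fun i => (hasDerivAt_pi.1 h i).exists_hasDerivWithinAt_Ioi_abs
  exact ⟨σ, hσ, hσe, HasDerivWithinAt.fun_sum fun i _ => hderiv i⟩

theorem sum_abs_le_integral_add_of_hasDerivAt_mulVec_add {ι : Type*} [Fintype ι] {a b : ℝ}
    (hab : a ≤ b) {A : ℝ → Matrix ι ι ℝ} (hA : ∀ t ∈ Ioo a b, (A t).IsMarkovGenerator)
    {e r : ℝ → ι → ℝ} (he : ∀ t ∈ Icc a b, HasDerivAt e (A t *ᵥ e t + r t) t)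
    (hr : IntegrableOn (fun t => ∑ i, |r t i|) (Icc a b)) :
    ∑ i, |e b i| ≤ (∫ t in a..b, ∑ i, |r t i|) + ∑ i, |e a i| := by
  have hcont : ContinuousOn (fun t => ∑ i, |e t i|) (Icc a b) := fun t ht => by
    have he_cont := (he t ht).continuousAt
    exact ((continuous_finsetSum _ fun i _ => (continuous_apply i).abs).continuousAt.comp
      he_cont).continuousWithinAt
  choose! σ hσ hσe hderiv using fun t (ht : t ∈ Ioo a b) =>
    (he t (Ioo_subset_Icc_self ht)).exists_hasDerivWithinAt_Ioi_sum_abs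
  have hbound : ∀ t ∈ Ioo a b, σ t ⬝ᵥ (A t *ᵥ e t + r t) ≤ ∑ i, |r t i| := fun t ht => by
    rw [dotProduct_add]
    linarith [(hA t ht).dotProduct_mulVec_nonpos (hσ t ht) (hσe t ht),
      dotProduct_le_sum_abs (hσ t ht) (r t)]
  linarith [sub_le_integral_of_hasDeriv_right_of_le hab hcont hderiv hr hbound]

theorem adjoint_error_estimate_dual_free_general {N : ℕ} (T : ℝ) (hT : 0 < T)
    (A : ℝ → Matrix (Fin N) (Fin N) ℝ)
    (hMarkov : ∀ t ∈ Set.Icc (0:ℝ) T,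
      (∀ i j, i ≠ j → 0 ≤ A t i j) ∧ (∀ j, ∑ i, A t i j = 0))
    (r : ℝ → (Fin N → ℝ)) (hr : ContinuousOn r (Set.Icc 0 T))
    (p ptilde : ℝ → (Fin N → ℝ))
    (hp : ∀ t ∈ Set.Icc (0:ℝ) T, HasDerivAt p ((A t) *ᵥ (p t)) t)
    (hptilde : ∀ t ∈ Set.Icc (0:ℝ) T,
      HasDerivAt ptilde ((A t) *ᵥ (ptilde t) + r t) t) :
    ∀ z : Fin N → ℝ,
      |z ⬝ᵥ (p T - ptilde T)|
        ≤ ‖z‖ * ((∫ t in (0:ℝ)..T, ∑ i, |r t i|)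
            + ∑ i, |p 0 i - ptilde 0 i|) := by
  intro z
  have herr : ∀ t ∈ Icc 0 T, HasDerivAt (p - ptilde) (A t *ᵥ (p - ptilde) t + -r t) t :=
    fun t ht => ((hp t ht).sub (hptilde t ht)).congr_deriv (by
      simp only [Pi.sub_apply, mulVec_sub]
      abel)
  have hint : IntegrableOn (fun t => ∑ i, |(-r t) i|) (Icc 0 T) := by
    simpa using (continuousOn_finsetSum _ fun i _ =>
      ((continuous_apply i).comp_continuousOn hr).abs).integrableOn_Icc
  have hl1 := sum_abs_le_integral_add_of_hasDerivAt_mulVec_add hT.le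
    (fun t ht => hMarkov t (Ioo_subset_Icc_self ht)) herr hint
  calc |z ⬝ᵥ (p T - ptilde T)| ≤ ‖z‖ * ∑ i, |(p T - ptilde T) i| :=
        abs_dotProduct_le_norm_mul_sum_abs z _
    _ ≤ _ := by
      gcongr
      simpa using hl1

/-- A posteriori error estimate not requiring the dual solution:
`|zᵀ (p(T) − p̃(T))| ≤ ‖z‖_∞ (∫₀ᵀ ‖r(t)‖_{ℓ¹} dt + ‖p(0) − p̃(0)‖_{ℓ¹})`,
for a master equation whose matrix `A(t)` is a Markov generator
(nonnegative off-diagonals, zero column sums).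
Here `‖·‖` on `Fin N → ℝ` is the sup (max-absolute-entry) norm, and the ℓ¹ norm
is written as the sum of absolute values of the entries. -/
theorem adjoint_error_estimate_dual_free {N : ℕ} (T : ℝ) (hT : 0 < T)
    (A : ℝ → Matrix (Fin N) (Fin N) ℝ) (hA : ContinuousOn A (Set.Icc 0 T))
    (hMarkov : ∀ t ∈ Set.Icc (0:ℝ) T,
      (∀ i j, i ≠ j → 0 ≤ A t i j) ∧ (∀ j, ∑ i, A t i j = 0))
    (r : ℝ → (Fin N → ℝ)) (hr : ContinuousOn r (Set.Icc 0 T))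
    (p ptilde : ℝ → (Fin N → ℝ))
    (hp : ∀ t ∈ Set.Icc (0:ℝ) T, HasDerivAt p ((A t) *ᵥ (p t)) t)
    (hptilde : ∀ t ∈ Set.Icc (0:ℝ) T,
      HasDerivAt ptilde ((A t) *ᵥ (ptilde t) + r t) t) :
    ∀ z : Fin N → ℝ,
      |z ⬝ᵥ (p T - ptilde T)|
        ≤ ‖z‖ * ((∫ t in (0:ℝ)..T, ∑ i, |r t i|)
            + ∑ i, |p 0 i - ptilde 0 i|) :=
  adjoint_error_estimate_dual_free_general T hT A hMarkov r hr p ptilde hp hptilde
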